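/- (Decay of the fractional Laplacian of a compactly supported function.) Let n ≥ 1 be an integer, s ∈ (0,1), and let f : ℝⁿ → ℝ be a smooth compactly supported function. Then there exists a constant C > 0 such that for all x ∈ ℝⁿ, |(−Δ)^s f(x)| ≤ C (1 + |x|)^{−(n+2s)}, where (−Δ)^s f(x) := (c_{n,s}/2) ∫_{ℝⁿ} (2f(x) − f(x+y) − f(x−y)) / |y|^{n+2s} dy. In particular, if γ is smooth with γ ≥ γ₀ > 0 and γ − 1 compactly supported, the Liouville potential q_γ = −γ^{-1/2}(−Δ)^s γ^{1/2} satisfies |q_γ(x)| ≤ C' (1 + |x|)^{−(n+2s)} for some constant C' > 0. -/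

import Mathlib

open MeasureTheory Metric Set
open scoped ENNReal NNReal
noncomputable section

/-- Euclidean space ℝⁿ. -/
abbrev RR (n : ℕ) := EuclideanSpace ℝ (Fin n)

/-- The constant c_{n,s} = 4^s Γ(n/2+s) / (π^{n/2} |Γ(-s)|). -/
def cns (n : ℕ) (s : ℝ) : ℝ :=
  (4 : ℝ) ^ s * Real.Gamma ((n : ℝ) / 2 + s) / (Real.pi ^ ((n : ℝ) / 2) * |Real.Gamma (-s)|)

/-- The Liouville potential q_γ = -γ^{-1/2} (-Δ)^s γ^{1/2}, with the fractional Laplacian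
given by the symmetrized singular integral. -/
def liouvillePot (n : ℕ) (s : ℝ) (γ : RR n → ℝ) (x : RR n) : ℝ :=
  -(Real.sqrt (γ x))⁻¹ * ((cns n s / 2) * ∫ y : RR n,
    (2 * Real.sqrt (γ x) - Real.sqrt (γ (x + y)) - Real.sqrt (γ (x - y))) /
      ‖y‖ ^ ((n : ℝ) + 2 * s))

/-- The fractional Laplacian (symmetrized singular integral) of a real-valued function. -/
def fracLapSI (n : ℕ) (s : ℝ) (f : RR n → ℝ) (x : RR n) : ℝ :=
  (cns n s / 2) * ∫ y : RR n,
    (2 * f x - f (x + y) - f (x - y)) / ‖y‖ ^ ((n : ℝ) + 2 * s)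

lemma aux_fin {n : ℕ} (hn : 1 ≤ n) {a : ℝ} (ha : -(n:ℝ) < a) :
    ∫⁻ y in closedBall (0 : RR n) 1, ENNReal.ofReal (‖y‖ ^ a) < ⊤ := by
  rcases le_or_gt 0 a with h0 | h0
  · calc ∫⁻ y in closedBall (0 : RR n) 1, ENNReal.ofReal (‖y‖ ^ a)
        ≤ ∫⁻ _ in closedBall (0 : RR n) 1, 1 := by
          refine setLIntegral_mono' measurableSet_closedBall fun y hy => ?_
          rw [mem_closedBall_zero_iff] at hy
          exact ENNReal.ofReal_le_one.2 (Real.rpow_le_one (norm_nonneg _) hy h0)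
      _ < ⊤ := by
          rw [lintegral_one, Measure.restrict_apply_univ]
          exact measure_closedBall_lt_top
  · -- dyadic decomposition
    set A : ℕ → Set (RR n) := fun k =>
      closedBall 0 ((1/2:ℝ)^k) \ closedBall 0 ((1/2:ℝ)^(k+1)) with hA
    have hcover : closedBall (0 : RR n) 1 ⊆ {0} ∪ ⋃ k, A k := by
      intro y hy
      rcases eq_or_ne y 0 with rfl | hy0
      · exact Or.inl rfl
      refine Or.inr ?_
      rw [mem_closedBall_zero_iff] at hy
      have hypos : 0 < ‖y‖ := norm_pos_iff.2 hy0
      have hex : ∃ k : ℕ, (1/2:ℝ)^(k+1) < ‖y‖ := by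
        obtain ⟨k, hk⟩ := exists_pow_lt_of_lt_one hypos (by norm_num : (1/2:ℝ) < 1)
        exact ⟨k, lt_of_le_of_lt (by
          apply pow_le_pow_of_le_one (by norm_num) (by norm_num); omega) hk⟩
      classical
      let k := Nat.find hex
      have hk1 : (1/2:ℝ)^(k+1) < ‖y‖ := Nat.find_spec hex
      have hk2 : ‖y‖ ≤ (1/2:ℝ)^k := by
        rcases Nat.eq_zero_or_pos k with hk0 | hk0
        · rw [hk0]; simpa using hy
        · have h1 := Nat.find_min hex (m := k - 1) (by omega)
          push_neg at h1
          have h2 : k - 1 + 1 = k := by omega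
          rw [h2] at h1
          exact h1

      refine mem_iUnion.2 ⟨k, ?_⟩
      simp only [hA, mem_diff, mem_closedBall_zero_iff]
      exact ⟨hk2, by simpa using not_le.2 hk1⟩
    have hV : volume (ball (0:RR n) 1) < ⊤ := measure_ball_lt_top
    set V := volume (ball (0:RR n) 1) with hVdef
    set q : ℝ := (1/2:ℝ) ^ ((n:ℝ) + a) with hq
    have hq0 : 0 < q := Real.rpow_pos_of_pos (by norm_num) _
    have hq1 : q < 1 := by
      apply Real.rpow_lt_one (by norm_num) (by norm_num)
      linarith
    have hmeasA : ∀ k, MeasurableSet (A k) :=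
      fun k => measurableSet_closedBall.diff measurableSet_closedBall
    have hterm : ∀ k : ℕ, ∫⁻ y in A k, ENNReal.ofReal (‖y‖ ^ a)
        ≤ ENNReal.ofReal ((1/2:ℝ)^a) * ENNReal.ofReal q ^ k * V := by
      intro k
      have hstep : ∫⁻ y in A k, ENNReal.ofReal (‖y‖ ^ a)
          ≤ ENNReal.ofReal (((1/2:ℝ)^(k+1)) ^ a) * volume (A k) := by
        rw [← setLIntegral_const (A k) _]
        refine setLIntegral_mono' (hmeasA k) fun y hy => ?_
        obtain ⟨hy1, hy2⟩ := hy
        rw [mem_closedBall_zero_iff] at hy2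
        push_neg at hy2
        exact ENNReal.ofReal_le_ofReal
          (Real.rpow_le_rpow_of_nonpos (by positivity) hy2.le h0.le)
      have hAk : volume (A k) ≤ ENNReal.ofReal (((1/2:ℝ)^k) ^ (n:ℕ)) * V := by
        calc volume (A k) ≤ volume (closedBall (0:RR n) ((1/2:ℝ)^k)) :=
              measure_mono diff_subset
          _ = ENNReal.ofReal (((1/2:ℝ)^k) ^ Module.finrank ℝ (RR n)) * V :=
              Measure.addHaar_closedBall _ _ (by positivity)
          _ = ENNReal.ofReal (((1/2:ℝ)^k) ^ (n:ℕ)) * V := by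
              rw [show Module.finrank ℝ (RR n) = n from finrank_euclideanSpace_fin]
      have hcoef : ((1/2:ℝ)^(k+1)) ^ a * ((1/2:ℝ)^k) ^ (n:ℕ)
          = (1/2:ℝ)^a * q ^ k := by
        have h2 : (0:ℝ) ≤ 1/2 := by norm_num
        have hpos : (0:ℝ) < 1/2 := by norm_num
        have e1 : ((1/2:ℝ)^(k+1)) ^ a = (1/2:ℝ) ^ ((((k:ℝ))+1) * a) := by
          rw [← Real.rpow_natCast (1/2:ℝ) (k+1), ← Real.rpow_mul h2]
          push_cast; ring_nf
        have e2 : ((1/2:ℝ)^k) ^ (n:ℕ) = (1/2:ℝ) ^ ((k:ℝ) * (n:ℝ)) := by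
          rw [← pow_mul, ← Real.rpow_natCast (1/2:ℝ) (k*n)]
          push_cast; ring_nf
        have e3 : q ^ k = (1/2:ℝ) ^ (((n:ℝ)+a) * (k:ℝ)) := by
          rw [hq, ← Real.rpow_natCast ((1/2:ℝ)^((n:ℝ)+a)) k, ← Real.rpow_mul h2]
        rw [e1, e2, e3, ← Real.rpow_add hpos, ← Real.rpow_add hpos]
        congr 1
        ring
      calc ∫⁻ y in A k, ENNReal.ofReal (‖y‖ ^ a)
          ≤ ENNReal.ofReal (((1/2:ℝ)^(k+1)) ^ a) * (ENNReal.ofReal (((1/2:ℝ)^k) ^ (n:ℕ)) * V) :=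
            hstep.trans (mul_le_mul_right hAk _)
        _ = ENNReal.ofReal ((1/2:ℝ)^a) * ENNReal.ofReal q ^ k * V := by
            rw [← mul_assoc, ← ENNReal.ofReal_mul (by positivity), hcoef,
              ENNReal.ofReal_mul (by positivity), ENNReal.ofReal_pow hq0.le]
    calc ∫⁻ y in closedBall (0:RR n) 1, ENNReal.ofReal (‖y‖ ^ a)
        ≤ ∫⁻ y in {0} ∪ ⋃ k, A k, ENNReal.ofReal (‖y‖ ^ a) :=
          lintegral_mono_set hcover
      _ ≤ (∫⁻ y in ({0} : Set (RR n)), ENNReal.ofReal (‖y‖ ^ a))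
          + ∫⁻ y in ⋃ k, A k, ENNReal.ofReal (‖y‖ ^ a) := lintegral_union_le _ _ _
      _ ≤ 0 + ∑' k, ∫⁻ y in A k, ENNReal.ofReal (‖y‖ ^ a) := by
          haveI : Nontrivial (RR n) := by
            have h : 0 < Module.finrank ℝ (RR n) := by
              rw [show Module.finrank ℝ (RR n) = n from finrank_euclideanSpace_fin]; omega
            exact Module.nontrivial_of_finrank_pos h
          gcongr
          · exact le_of_eq (setLIntegral_measure_zero _ _ (measure_singleton 0))
          · exact lintegral_iUnion_le _ _
      _ ≤ 0 + ∑' k : ℕ, ENNReal.ofReal ((1/2:ℝ)^a) * ENNReal.ofReal q ^ k * V := by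
          gcongr with k
          exact hterm k
      _ = ENNReal.ofReal ((1/2:ℝ)^a) * (∑' k : ℕ, ENNReal.ofReal q ^ k) * V := by
          rw [zero_add, ENNReal.tsum_mul_right, ENNReal.tsum_mul_left]
      _ < ⊤ := by
          rw [ENNReal.tsum_geometric]
          refine ENNReal.mul_lt_top (ENNReal.mul_lt_top ENNReal.ofReal_lt_top ?_) hV
          refine ENNReal.inv_lt_top.2 ?_
          rw [tsub_pos_iff_lt]
          exact ENNReal.ofReal_lt_one.2 hq1


-- Taylor-type bound
lemma taylor_bound {n : ℕ} {f : RR n → ℝ} (hf : ContDiff ℝ (⊤ : ℕ∞) f) {K : NNReal}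
    (hK : LipschitzWith K (fderiv ℝ f)) (x y : RR n) :
    |2 * f x - f (x + y) - f (x - y)| ≤ 2 * K * ‖y‖ ^ 2 := by
  set φ := fderiv ℝ f x
  have hder : ∀ z ∈ closedBall x ‖y‖, HasFDerivWithinAt f (fderiv ℝ f z) (closedBall x ‖y‖) z :=
    fun z _ => ((hf.differentiable (by simp)) z).hasFDerivAt.hasFDerivWithinAt
  have hbound : ∀ z ∈ closedBall x ‖y‖, ‖fderiv ℝ f z - φ‖ ≤ (K : ℝ) * ‖y‖ := by
    intro z hz
    have := hK.dist_le_mul z x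
    rw [dist_eq_norm] at this
    refine this.trans ?_
    have : dist z x ≤ ‖y‖ := mem_closedBall.1 hz
    nlinarith [K.coe_nonneg]
  have h1 : ‖f (x + y) - f x - φ ((x + y) - x)‖ ≤ ((K : ℝ) * ‖y‖) * ‖(x + y) - x‖ :=
    Convex.norm_image_sub_le_of_norm_hasFDerivWithin_le' hder hbound (convex_closedBall _ _)
      (mem_closedBall_self (norm_nonneg _)) (by simp [mem_closedBall, dist_self_add_left])
  have h2 : ‖f (x - y) - f x - φ ((x - y) - x)‖ ≤ ((K : ℝ) * ‖y‖) * ‖(x - y) - x‖ :=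
    Convex.norm_image_sub_le_of_norm_hasFDerivWithin_le' hder hbound (convex_closedBall _ _)
      (mem_closedBall_self (norm_nonneg _)) (by simp [mem_closedBall, dist_self_sub_left])
  have e1 : (x + y) - x = y := by abel
  have e2 : (x - y) - x = -y := by abel
  rw [e1] at h1
  rw [e2] at h2
  have hφ : φ y + φ (-y) = 0 := by rw [map_neg]; ring
  have : 2 * f x - f (x + y) - f (x - y)
      = -((f (x + y) - f x - φ y) + (f (x - y) - f x - φ (-y))) := by
    have := hφ
    ring_nf
    linarith [hφ]
  rw [this, abs_neg]
  calc |(f (x + y) - f x - φ y) + (f (x - y) - f x - φ (-y))|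
      ≤ |f (x + y) - f x - φ y| + |f (x - y) - f x - φ (-y)| := abs_add_le _ _
    _ ≤ ((K : ℝ) * ‖y‖) * ‖y‖ + ((K : ℝ) * ‖y‖) * ‖(-y : RR n)‖ := by
        refine add_le_add ?_ ?_
        · simpa [Real.norm_eq_abs] using h1
        · simpa [Real.norm_eq_abs] using h2
    _ = 2 * K * ‖y‖ ^ 2 := by rw [norm_neg]; ring

lemma div_bound {p M N t u : ℝ} (hp : 0 < p) (hM : 0 ≤ M) (hu : 0 ≤ u)
    (ht : (1+u)/2 ≤ t) (hN : |N| ≤ M) : |N / t ^ p| ≤ M * 2 ^ p * (1+u) ^ (-p) := by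
  have h1u : (0:ℝ) < 1 + u := by linarith
  have ht0 : 0 < t := lt_of_lt_of_le (by linarith) ht
  have htp : 0 < t ^ p := Real.rpow_pos_of_pos ht0 _
  rw [abs_div, abs_of_nonneg htp.le]
  have step1 : |N| / t ^ p ≤ M / ((1+u)/2) ^ p := by
    apply div_le_div₀ hM hN (Real.rpow_pos_of_pos (by linarith) _)
    exact Real.rpow_le_rpow (by linarith) ht hp.le
  refine step1.trans (le_of_eq ?_)
  rw [Real.div_rpow h1u.le (by norm_num : (0:ℝ) ≤ 2), Real.rpow_neg h1u.le]
  have h2p : (0:ℝ) < (2:ℝ) ^ p := Real.rpow_pos_of_pos (by norm_num) _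
  have h1up : (0:ℝ) < (1+u) ^ p := Real.rpow_pos_of_pos h1u _
  field_simp

lemma key_decay {n : ℕ} (hn : 1 ≤ n) {s : ℝ} (hs : s ∈ Set.Ioo (0:ℝ) 1) (c : ℝ)
    {f : RR n → ℝ} (hf : ContDiff ℝ (⊤ : ℕ∞) f) (hcf : HasCompactSupport f) :
    ∃ C > (0:ℝ), ∀ x : RR n,
      |c * ∫ y : RR n, (2 * f x - f (x+y) - f (x-y)) / ‖y‖ ^ ((n:ℝ) + 2*s)|
        ≤ C * (1 + ‖x‖) ^ (-((n:ℝ) + 2*s)) := by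
  obtain ⟨hs0, hs1⟩ := hs
  set p : ℝ := (n:ℝ) + 2*s with hpdef
  have hppos : 0 < p := by positivity
  have hnp : (n:ℝ) < p := by simp only [hpdef]; linarith
  have hp2 : -(n:ℝ) < 2 - p := by simp only [hpdef]; linarith
  -- bound on f
  obtain ⟨A, hA⟩ := hcf.exists_bound_of_continuous hf.continuous
  have hA0 : 0 ≤ A := (norm_nonneg (f 0)).trans (hA 0)
  -- Lipschitz bound on the derivative
  obtain ⟨K, hK⟩ := ContDiff.lipschitzWith_of_hasCompactSupport (hcf.fderiv ℝ)
    (hf.fderiv_right (m := 1) (WithTop.coe_le_coe.2 le_top)) one_ne_zero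
  have hTay := taylor_bound hf hK
  -- support radius
  obtain ⟨R0, hR0⟩ := hcf.isBounded.subset_closedBall 0
  set R : ℝ := max R0 0 with hRdef
  have hRnn : 0 ≤ R := le_max_right _ _
  have hRsupp : tsupport f ⊆ closedBall 0 R :=
    hR0.trans (closedBall_subset_closedBall (le_max_left _ _))
  have hfzero : ∀ z : RR n, R < ‖z‖ → f z = 0 := by
    intro z hz
    refine image_eq_zero_of_notMem_tsupport fun hmem => ?_
    exact absurd (mem_closedBall_zero_iff.1 (hRsupp hmem)) (not_le.2 hz)
  -- the uniform dominating function
  set H : RR n → ℝ≥0∞ := fun y =>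
    (closedBall (0:RR n) 1).indicator
      (fun y => ENNReal.ofReal (2 * K * ‖y‖ ^ ((2:ℝ) - p))) y
    + ENNReal.ofReal ((4*A*2^p) * (1+‖y‖) ^ (-p)) with hHdef
  have hpoint : ∀ x y : RR n,
      (‖(2 * f x - f (x+y) - f (x-y)) / ‖y‖ ^ p‖₊ : ℝ≥0∞) ≤ H y := by
    intro x y
    rw [← enorm_eq_nnnorm, Real.enorm_eq_ofReal_abs]
    by_cases hy : y ∈ closedBall (0:RR n) 1
    · rcases eq_or_ne y 0 with rfl | hy0
      · have h0 : 2 * f x - f x - f x = 0 := by ring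
        simp only [add_zero, sub_zero, h0, zero_div, abs_zero, ENNReal.ofReal_zero]
        exact zero_le
      have hny : (0:ℝ) < ‖y‖ := norm_pos_iff.2 hy0
      have hbound : |(2 * f x - f (x+y) - f (x-y)) / ‖y‖ ^ p| ≤ 2 * K * ‖y‖ ^ ((2:ℝ) - p) := by
        rw [abs_div, abs_of_nonneg (Real.rpow_nonneg (norm_nonneg y) p)]
        have h2 : ‖y‖ ^ ((2:ℝ) - p) = ‖y‖ ^ (2:ℕ) / ‖y‖ ^ p := by
          rw [Real.rpow_sub hny]
          norm_num [Real.rpow_natCast]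
        rw [h2, ← mul_div_assoc]
        gcongr
        exact hTay x y
      simp only [hHdef, Set.indicator_of_mem hy]
      exact (ENNReal.ofReal_le_ofReal hbound).trans le_self_add
    · have h1y : 1 < ‖y‖ := not_le.1 fun h => hy (mem_closedBall_zero_iff.2 h)
      have hNb : |2 * f x - f (x+y) - f (x-y)| ≤ 4*A := by
        have h1 := abs_le.1 ((Real.norm_eq_abs _ ▸ hA x))
        have h2 := abs_le.1 ((Real.norm_eq_abs _ ▸ hA (x+y)))
        have h3 := abs_le.1 ((Real.norm_eq_abs _ ▸ hA (x-y)))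
        exact abs_le.2 ⟨by linarith, by linarith⟩
      have := div_bound hppos (by positivity : (0:ℝ) ≤ 4*A) (norm_nonneg y)
        (by linarith : (1+‖y‖)/2 ≤ ‖y‖) hNb
      simp only [hHdef, Set.indicator_of_notMem hy, zero_add]
      exact ENNReal.ofReal_le_ofReal this
  -- finiteness of the dominating integral
  have hHfin : ∫⁻ y : RR n, H y < ⊤ := by
    have hmeas1 : Measurable fun y : RR n =>
        (closedBall (0:RR n) 1).indicator
          (fun y => ENNReal.ofReal (2 * K * ‖y‖ ^ ((2:ℝ) - p))) y := by
      refine Measurable.indicator ?_ measurableSet_closedBall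
      exact ((measurable_const.mul (measurable_norm.pow_const _)).ennreal_ofReal)
    rw [hHdef, lintegral_add_left hmeas1]
    refine ENNReal.add_lt_top.2 ⟨?_, ?_⟩
    · rw [lintegral_indicator measurableSet_closedBall]
      have : ∀ y : RR n, ENNReal.ofReal (2 * K * ‖y‖ ^ ((2:ℝ) - p))
          = ENNReal.ofReal (2*K) * ENNReal.ofReal (‖y‖ ^ ((2:ℝ) - p)) := by
        intro y
        rw [← ENNReal.ofReal_mul (by positivity)]
      simp only [this]
      rw [lintegral_const_mul' _ _ ENNReal.ofReal_ne_top]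
      exact ENNReal.mul_lt_top ENNReal.ofReal_lt_top (aux_fin hn hp2)
    · calc ∫⁻ y : RR n, ENNReal.ofReal ((4*A*2^p) * (1+‖y‖) ^ (-p))
          = ∫⁻ y : RR n, ENNReal.ofReal (4*A*2^p) * ENNReal.ofReal ((1+‖y‖) ^ (-p)) := by
            congr 1; funext y; rw [← ENNReal.ofReal_mul (by positivity)]
        _ = ENNReal.ofReal (4*A*2^p) * ∫⁻ y : RR n, ENNReal.ofReal ((1+‖y‖) ^ (-p)) :=
            lintegral_const_mul' _ _ ENNReal.ofReal_ne_top
        _ < ⊤ := by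
            refine ENNReal.mul_lt_top ENNReal.ofReal_lt_top ?_
            refine finite_integral_one_add_norm ?_
            rw [show Module.finrank ℝ (RR n) = n from finrank_euclideanSpace_fin]
            exact hnp
  -- the uniform bound
  have hunif : ∀ x : RR n,
      |∫ y : RR n, (2 * f x - f (x+y) - f (x-y)) / ‖y‖ ^ p|
        ≤ (∫⁻ y : RR n, H y).toReal := by
    intro x
    have h1 : |∫ y : RR n, (2 * f x - f (x+y) - f (x-y)) / ‖y‖ ^ p|
        ≤ (∫⁻ y : RR n, (‖(2 * f x - f (x+y) - f (x-y)) / ‖y‖ ^ p‖₊ : ℝ≥0∞)).toReal := by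
      have h0 := norm_integral_le_lintegral_norm (μ := (volume : Measure (RR n)))
        (fun y : RR n => (2 * f x - f (x+y) - f (x-y)) / ‖y‖ ^ p)
      simp_rw [ofReal_norm, enorm_eq_nnnorm] at h0
      rw [← Real.norm_eq_abs]
      exact h0
    exact h1.trans (ENNReal.toReal_mono hHfin.ne (lintegral_mono (hpoint x)))
  -- the large x bound
  set VR : ℝ := (volume (closedBall (0:RR n) R)).toReal with hVRdef
  have hVRnn : 0 ≤ VR := ENNReal.toReal_nonneg
  have hlarge : ∀ x : RR n, 2*R + 1 ≤ ‖x‖ →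
      |∫ y : RR n, (2 * f x - f (x+y) - f (x-y)) / ‖y‖ ^ p|
        ≤ (4*A*2^p*VR) * (1 + ‖x‖) ^ (-p) := by
    intro x hx
    have hxR : R < ‖x‖ := by linarith
    have hfx : f x = 0 := hfzero x hxR
    set Ex : Set (RR n) := closedBall (-x) R ∪ closedBall x R with hExdef
    set cx : ℝ := 2*A*2^p * (1 + ‖x‖) ^ (-p) with hcxdef
    have hcx0 : 0 ≤ cx := by positivity
    have hpt : ∀ y : RR n,
        (‖(2 * f x - f (x+y) - f (x-y)) / ‖y‖ ^ p‖₊ : ℝ≥0∞)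
          ≤ Ex.indicator (fun _ => ENNReal.ofReal cx) y := by
      intro y
      rw [← enorm_eq_nnnorm, Real.enorm_eq_ofReal_abs]
      by_cases hy : y ∈ Ex
      · rw [Set.indicator_of_mem hy]
        have hyn : (1 + ‖x‖)/2 ≤ ‖y‖ := by
          rcases hy with hy | hy
          · have : ‖y + x‖ ≤ R := by
              have := mem_closedBall.1 hy
              rwa [dist_eq_norm, sub_neg_eq_add] at this
            have hxy : ‖x‖ ≤ R + ‖y‖ := by
              calc ‖x‖ = ‖(y + x) - y‖ := by congr 1; abel
                _ ≤ ‖y + x‖ + ‖y‖ := norm_sub_le _ _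
                _ ≤ R + ‖y‖ := by linarith
            linarith
          · have : ‖y - x‖ ≤ R := by
              have := mem_closedBall.1 hy
              rwa [dist_eq_norm] at this
            have hxy : ‖x‖ ≤ R + ‖y‖ := by
              calc ‖x‖ = ‖-(y - x) + y‖ := by congr 1; abel
                _ ≤ ‖-(y - x)‖ + ‖y‖ := norm_add_le _ _
                _ ≤ R + ‖y‖ := by rw [norm_neg]; linarith
            linarith
        have hNb : |2 * f x - f (x+y) - f (x-y)| ≤ 2*A := by
          have h2 := abs_le.1 ((Real.norm_eq_abs _ ▸ hA (x+y)))
          have h3 := abs_le.1 ((Real.norm_eq_abs _ ▸ hA (x-y)))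
          rw [hfx]
          exact abs_le.2 ⟨by linarith, by linarith⟩
        have := div_bound hppos (by positivity : (0:ℝ) ≤ 2*A) (norm_nonneg x) hyn hNb
        exact ENNReal.ofReal_le_ofReal (by rw [hcxdef]; exact this)
      · rw [Set.indicator_of_notMem hy]
        have hy1 : y ∉ closedBall (-x) R := fun h => hy (Or.inl h)
        have hy2 : y ∉ closedBall x R := fun h => hy (Or.inr h)
        have hfxy : f (x + y) = 0 := by
          apply hfzero
          have : R < dist y (-x) := not_le.1 fun h => hy1 (mem_closedBall.2 h)
          rwa [dist_eq_norm, sub_neg_eq_add, show y + x = x + y from add_comm y x] at this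
        have hfxy' : f (x - y) = 0 := by
          apply hfzero
          have : R < dist y x := not_le.1 fun h => hy2 (mem_closedBall.2 h)
          rwa [dist_eq_norm, ← norm_neg, neg_sub] at this
        rw [hfx, hfxy, hfxy']
        simp
    calc |∫ y : RR n, (2 * f x - f (x+y) - f (x-y)) / ‖y‖ ^ p|
        ≤ (∫⁻ y : RR n, (‖(2 * f x - f (x+y) - f (x-y)) / ‖y‖ ^ p‖₊ : ℝ≥0∞)).toReal := by
          have h0 := norm_integral_le_lintegral_norm (μ := (volume : Measure (RR n)))
            (fun y : RR n => (2 * f x - f (x+y) - f (x-y)) / ‖y‖ ^ p)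
          simp_rw [ofReal_norm, enorm_eq_nnnorm] at h0
          rw [← Real.norm_eq_abs]
          exact h0
      _ ≤ (ENNReal.ofReal cx * volume Ex).toReal := by
          apply ENNReal.toReal_mono
          · refine (ENNReal.mul_lt_top ENNReal.ofReal_lt_top ?_).ne
            refine lt_of_le_of_lt (measure_union_le _ _) ?_
            exact ENNReal.add_lt_top.2 ⟨measure_closedBall_lt_top, measure_closedBall_lt_top⟩
          · exact (lintegral_mono hpt).trans (lintegral_indicator_const_le _ _)
      _ = cx * (volume Ex).toReal := by
          rw [ENNReal.toReal_mul, ENNReal.toReal_ofReal hcx0]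
      _ ≤ cx * (2 * VR) := by
          have hEx : volume Ex ≤ 2 * volume (closedBall (0:RR n) R) := by
            refine (measure_union_le _ _).trans ?_
            rw [Measure.addHaar_closedBall_center volume (-x),
              Measure.addHaar_closedBall_center volume x, two_mul]
          refine mul_le_mul_of_nonneg_left ?_ hcx0
          have h2 : (2 * volume (closedBall (0:RR n) R)).toReal = 2 * VR := by
            rw [ENNReal.toReal_mul, hVRdef]
            norm_num
          calc (volume Ex).toReal
              ≤ (2 * volume (closedBall (0:RR n) R)).toReal := by
                apply ENNReal.toReal_mono _ hEx
                exact (ENNReal.mul_lt_top (by norm_num) measure_closedBall_lt_top).ne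
            _ = 2 * VR := h2
      _ = (4*A*2^p*VR) * (1 + ‖x‖) ^ (-p) := by rw [hcxdef]; ring
  -- assembly
  set B : ℝ := (∫⁻ y : RR n, H y).toReal with hBdef
  have hB0 : 0 ≤ B := ENNReal.toReal_nonneg
  set T : ℝ := 2*R + 1 with hTdef
  have hT0 : (0:ℝ) < 1 + T := by simp only [hTdef]; linarith
  set C : ℝ := max (|c| * B * (1+T)^p) (|c| * (4*A*2^p*VR)) + 1 with hCdef
  have hC0 : 0 < C := by
    have h1 : (0:ℝ) ≤ |c| * B * (1+T)^p := by positivity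
    have := le_max_left (|c| * B * (1+T)^p) (|c| * (4*A*2^p*VR))
    simp only [hCdef]; linarith
  refine ⟨C, hC0, fun x => ?_⟩
  have hx1 : (0:ℝ) < 1 + ‖x‖ := by positivity
  rw [abs_mul]
  rcases le_or_gt ‖x‖ T with hxT | hxT
  · have step1 : |c| * |∫ y : RR n, (2 * f x - f (x+y) - f (x-y)) / ‖y‖ ^ p| ≤ |c| * B :=
      mul_le_mul_of_nonneg_left (hunif x) (abs_nonneg c)
    refine step1.trans ?_
    have e1 : |c| * B = (|c| * B * (1+T)^p) * (1+T)^(-p) := by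
      rw [mul_assoc, ← Real.rpow_add hT0]
      simp
    rw [e1]
    have h2 : (1+T)^(-p) ≤ (1+‖x‖)^(-p) :=
      Real.rpow_le_rpow_of_nonpos hx1 (by linarith) (by linarith)
    calc (|c| * B * (1+T)^p) * (1+T)^(-p)
        ≤ C * (1+T)^(-p) := by
          refine mul_le_mul_of_nonneg_right ?_ (Real.rpow_nonneg hT0.le _)
          simp only [hCdef]
          exact le_trans (le_max_left _ _) (by linarith)
      _ ≤ C * (1+‖x‖)^(-p) := mul_le_mul_of_nonneg_left h2 hC0.le
  · have step1 := hlarge x hxT.le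
    calc |c| * |∫ y : RR n, (2 * f x - f (x+y) - f (x-y)) / ‖y‖ ^ p|
        ≤ |c| * ((4*A*2^p*VR) * (1 + ‖x‖) ^ (-p)) :=
          mul_le_mul_of_nonneg_left step1 (abs_nonneg c)
      _ = (|c| * (4*A*2^p*VR)) * (1 + ‖x‖) ^ (-p) := by ring
      _ ≤ C * (1 + ‖x‖) ^ (-p) := by
          refine mul_le_mul_of_nonneg_right ?_ (Real.rpow_nonneg hx1.le _)
          simp only [hCdef]
          exact le_trans (le_max_right _ _) (by linarith)

/-- Decay of the fractional Laplacian of a smooth compactly supported function: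
|(-Δ)^s f(x)| ≤ C (1+|x|)^{-(n+2s)}; in particular the Liouville potential q_γ of a
conductivity γ ≥ γ₀ > 0 with γ - 1 compactly supported obeys the same decay. -/
theorem fractional_laplacian_decay
    (n : ℕ) (hn : 1 ≤ n) (s : ℝ) (hs : s ∈ Set.Ioo (0 : ℝ) 1)
    (f : RR n → ℝ) (hf : ContDiff ℝ (⊤ : ℕ∞) f) (hcf : HasCompactSupport f) :
    (∃ C > (0 : ℝ), ∀ x : RR n,
        |fracLapSI n s f x| ≤ C * (1 + ‖x‖) ^ (-((n : ℝ) + 2 * s))) ∧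
    (∀ γ : RR n → ℝ, ContDiff ℝ (⊤ : ℕ∞) γ →
      ∀ γ₀ : ℝ, 0 < γ₀ → (∀ x, γ₀ ≤ γ x) → HasCompactSupport (fun x => γ x - 1) →
        ∃ C' > (0 : ℝ), ∀ x : RR n,
          |liouvillePot n s γ x| ≤ C' * (1 + ‖x‖) ^ (-((n : ℝ) + 2 * s))) := by
  constructor
  · obtain ⟨C, hC0, hC⟩ := key_decay hn hs (cns n s / 2) hf hcf
    exact ⟨C, hC0, fun x => hC x⟩
  · intro γ hγ γ₀ hγ₀ hb hsupp
    have hγpos : ∀ z, 0 < γ z := fun z => lt_of_lt_of_le hγ₀ (hb z)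
    set g : RR n → ℝ := fun z => Real.sqrt (γ z) - 1 with hgdef
    have hg : ContDiff ℝ (⊤ : ℕ∞) g := by
      have hsq : ContDiff ℝ (⊤ : ℕ∞) fun z => Real.sqrt (γ z) := by
        rw [contDiff_iff_contDiffAt]
        intro z
        exact (Real.contDiffAt_sqrt (hγpos z).ne').comp z hγ.contDiffAt
      exact hsq.sub contDiff_const
    have hgc : HasCompactSupport g := by
      refine hsupp.mono ?_
      intro z hz
      simp only [Function.mem_support, hgdef] at hz ⊢
      intro h0
      apply hz
      have : γ z = 1 := by linarith [sub_eq_zero.1 (by linarith [h0] : γ z - 1 = 0)]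
      rw [this, Real.sqrt_one]
      ring
    obtain ⟨C, hC0, hC⟩ := key_decay hn hs (cns n s / 2) hg hgc
    have hsγ₀ : 0 < Real.sqrt γ₀ := Real.sqrt_pos.2 hγ₀
    refine ⟨C * (Real.sqrt γ₀)⁻¹, by positivity, fun x => ?_⟩
    have heq : liouvillePot n s γ x
        = -(Real.sqrt (γ x))⁻¹ * (cns n s / 2 *
          ∫ y : RR n, (2 * g x - g (x+y) - g (x-y)) / ‖y‖ ^ ((n:ℝ) + 2*s)) := by
      unfold liouvillePot
      congr 2
      refine integral_congr_ae (Filter.Eventually.of_forall fun y => ?_)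
      simp only [hgdef]
      congr 1
      ring
    rw [heq, abs_mul, abs_neg, abs_inv, abs_of_nonneg (Real.sqrt_nonneg _)]
    have h1 : (Real.sqrt (γ x))⁻¹ ≤ (Real.sqrt γ₀)⁻¹ := by
      apply inv_anti₀ hsγ₀
      exact Real.sqrt_le_sqrt (hb x)
    calc (Real.sqrt (γ x))⁻¹ * |cns n s / 2 *
          ∫ y : RR n, (2 * g x - g (x+y) - g (x-y)) / ‖y‖ ^ ((n:ℝ) + 2*s)|
        ≤ (Real.sqrt γ₀)⁻¹ * (C * (1 + ‖x‖) ^ (-((n:ℝ) + 2*s))) := by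
          apply mul_le_mul h1 (hC x) (abs_nonneg _) (by positivity)
      _ = C * (Real.sqrt γ₀)⁻¹ * (1 + ‖x‖) ^ (-((n:ℝ) + 2*s)) := by ring
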